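/- With C' the biased Markov chain of an abstraction (C,F) →^α (C^•,F^•) as above, for every finite path ρ in C' starting at s with positive probability in C' whose last state is not s₋, the probabilities satisfy Pr_C(ρ) = Pr_{C'}(ρ) · μ^•(α(s)) / μ^•(α(last(ρ))). -/

import Mathlib

open scoped ENNReal NNReal BigOperators
open Filter

noncomputable section

variable {S : Type*}

/-- Probability of following a finite path (list of successive states). -/
def pathProb (P : S → S → ℝ≥0∞) : List S → ℝ≥0∞
  | [] => 1
  | [_] => 1
  | a :: b :: l => P a b * pathProb P (b :: l)

/-- `l` is a finite path starting at `s` that visits `T` for the first time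
at its last element. -/
def FirstHitPath (T : Set S) (s : S) (l : List S) : Prop :=
  l.head? = some s ∧ ∃ h : l ≠ [], l.getLast h ∈ T ∧
    ∀ i : Fin l.length, (i : ℕ) + 1 < l.length → l.get i ∉ T

/-- Probability of eventually reaching `T` from `s`. -/
def reachProb (P : S → S → ℝ≥0∞) (T : Set S) (s : S) : ℝ≥0∞ :=
  ∑' l : {l : List S // FirstHitPath T s l}, pathProb P (l : List S)

/-- The avoid set: states from which `T` is unreachable. -/
def Av (P : S → S → ℝ≥0∞) (T : Set S) : Set S := {s | reachProb P T s = 0}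

/-- Probability that, starting from `s`, the chain stays outside `R`
during its first `n` steps (i.e. the hitting time of `R` is `> n`). -/
def surviveProb (P : S → S → ℝ≥0∞) (R : Set S) (s : S) (n : ℕ) : ℝ≥0∞ :=
  ∑' l : {l : List S // l.length = n + 1 ∧ l.head? = some s ∧ ∀ x ∈ l, x ∉ R},
    pathProb P (l : List S)

/-- Expected hitting time of `R` from `s`, via `E τ = ∑_{n≥0} Pr(τ > n)`. -/
def expHittingTime (P : S → S → ℝ≥0∞) (R : Set S) (s : S) : ℝ≥0∞ :=
  ∑' n : ℕ, surviveProb P R s n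

/-- Probability that `X_i ∈ A` for all `i ≥ m`, starting from `s`
(as the infimum over finite horizons). -/
def confineProb (P : S → S → ℝ≥0∞) (A : Set S) (s : S) (m : ℕ) : ℝ≥0∞ :=
  ⨅ n : ℕ, ∑' l : {l : List S // l.length = n + 1 ∧ l.head? = some s ∧
      ∀ i : Fin l.length, m ≤ (i : ℕ) → l.get i ∈ A}, pathProb P (l : List S)

/-- Expected reward collected at the first visit of `T`. -/
def expReward (P : S → S → ℝ≥0∞) (L : List S → ℝ≥0∞) (T : Set S) (s : S) : ℝ≥0∞ :=
  ∑' l : {l : List S // FirstHitPath T s l}, L l * pathProb P (l : List S)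

/-- `P` is a stochastic matrix. -/
def IsStochastic (P : S → S → ℝ≥0∞) : Prop := ∀ s, ∑' s', P s s' = 1

/-- States of the biased chain other than `s₋`. -/
abbrev SA (P : S → S → ℝ≥0∞) (F : Set S) := {s : S // s ∉ Av P F}

/-- `P'` (on `(S ∖ Av(F)) ⊎ {s₋}`, with `none = s₋`) is a biased Markov chain
of `(C, T, F)`. -/
def IsBiased (P : S → S → ℝ≥0∞) (T F : Set S)
    (P' : Option (SA P F) → Option (SA P F) → ℝ≥0∞) : Prop :=
  IsStochastic P' ∧
  P' none none = 1 ∧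
  (∀ s : SA P F, s.val ∈ T → P' (some s) (some s) = 1) ∧
  (∀ s s' : SA P F, 0 < P s.val s'.val → 0 < P' (some s) (some s'))

/-- `(C^•, F^•)` together with `α` is an abstraction of `(C, F)`. -/
def IsAbstraction (P : S → S → ℝ≥0∞) (F : Set S)
    {S' : Type*} (P' : S' → S' → ℝ≥0∞) (F' : Set S')
    (α : SA P F → S') : Prop :=
  (∀ s : SA P F, s.val ∈ F → α s ∈ F') ∧
  (∀ s : SA P F, s.val ∉ F →
    ∑' s' : SA P F, P s.val s'.val * reachProb P' F' (α s')
      ≤ reachProb P' F' (α s))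

/-- The decreasing ratio `h(s)` of an abstraction. -/
def hRatio (P : S → S → ℝ≥0∞) (F : Set S)
    {S' : Type*} (P' : S' → S' → ℝ≥0∞) (F' : Set S')
    (α : SA P F → S') (s : SA P F) : ℝ≥0∞ :=
  (∑' s' : SA P F, P s.val s'.val * reachProb P' F' (α s'))
    / reachProb P' F' (α s)

/-- The biased Markov chain constructed from an abstraction. -/
def biasedKernel (P : S → S → ℝ≥0∞) (F : Set S)
    {S' : Type*} (P' : S' → S' → ℝ≥0∞) (F' : Set S')
    (α : SA P F → S') :
    Option (SA P F) → Option (SA P F) → ℝ≥0∞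
  | none, none => 1
  | none, some _ => 0
  | some s, none => 1 - hRatio P F P' F' α s
  | some s, some s' =>
      P s.val s'.val * reachProb P' F' (α s') / reachProb P' F' (α s)

/-- The random walk `W^p` on `ℕ`: `0` absorbing, up with probability `p`,
down with probability `1 - p`. -/
def walkKernel (p : ℝ≥0∞) : ℕ → ℕ → ℝ≥0∞ := fun m n =>
  if m = 0 then (if n = 0 then 1 else 0)
  else if n = m + 1 then p
  else if n + 1 = m then 1 - p
  else 0

/-- `(C, λ)` is a layered Markov chain. -/
def IsLMC (P : S → S → ℝ≥0∞) (lam : S → ℕ) : Prop :=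
  (∀ s s', 0 < P s s' → (lam s : ℤ) ≤ (lam s' : ℤ) + 1) ∧
  (∀ n : ℕ, {s : S | lam s = n}.Finite)

/-- Total probability of increasing the level. -/
def Pup (P : S → S → ℝ≥0∞) (lam : S → ℕ) (s : S) : ℝ≥0∞ :=
  ∑' s' : {s' : S // lam s < lam s'}, P s s'

/-- Total probability of decreasing the level (by one). -/
def Pdown (P : S → S → ℝ≥0∞) (lam : S → ℕ) (s : S) : ℝ≥0∞ :=
  ∑' s' : {s' : S // lam s' + 1 = lam s}, P s s'

/-- Total probability of keeping the same level. -/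
def Peq (P : S → S → ℝ≥0∞) (lam : S → ℕ) (s : S) : ℝ≥0∞ :=
  ∑' s' : {s' : S // lam s' = lam s}, P s s'

/-- `(C, λ)` is `(p⁺, N₀)`-divergent. -/
def Divergent (P : S → S → ℝ≥0∞) (lam : S → ℕ) (pplus : ℝ≥0∞) (N₀ : ℕ) : Prop :=
  1/2 < pplus ∧ ∀ s : S, N₀ < lam s → Peq P lam s < 1 →
    pplus ≤ Pup P lam s / (Pdown P lam s + Pup P lam s)

end

/-!
The biased kernel is the Doob transform of `P` by the weight `w = μ^• ∘ α`, that is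
`P'(s, s') = P(s, s') · w(s') / w(s)`, so along a path the weights telescope and only
`w(s) / w(last)` survives. This needs `0 < w < ∞`. The upper bound holds because
reachability probabilities in a stochastic chain are at most `1`: paths that first hit `T`
are prefix-free, and their mass is split by first step. Positivity holds off `Av_C(F)`:
along a positive-probability path to `F`, the abstraction inequality
`P(s, s') · w(s') ≤ w(s)` carries positivity backwards from `F^•`, where `w ≥ 1`.
-/

open scoped Classical

section Thms

variable {S : Type*}

lemma pathProb_map {ι : Type*} (P : S → S → ℝ≥0∞) (f : ι → S) :
    ∀ l : List ι, pathProb P (l.map f) = pathProb (fun a b => P (f a) (f b)) l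
  | [] | [_] => rfl
  | a :: b :: l => by
    simp only [List.map_cons, pathProb] at *
    rw [← pathProb_map P f (b :: l), List.map_cons]

lemma pathProb_reweight {ι : Type*} (P : ι → ι → ℝ≥0∞) (w : ι → ℝ≥0∞)
    (hw₀ : ∀ i, w i ≠ 0) (hw : ∀ i, w i ≠ ⊤) :
    ∀ (a : ι) (l : List ι), pathProb P (a :: l) =
      pathProb (fun i j => P i j * w j / w i) (a :: l) * w a /
        w ((a :: l).getLast (List.cons_ne_nil a l))
  | a, [] => by simp [pathProb, ENNReal.div_self (hw₀ a) (hw a)]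
  | a, b :: l => by
    rw [pathProb, pathProb, pathProb_reweight P w hw₀ hw b l, List.getLast_cons_cons]
    generalize pathProb _ (b :: l) = q
    generalize w ((b :: l).getLast _) = z
    simp only [div_eq_mul_inv]
    calc P a b * (q * w b * z⁻¹)
        = P a b * w b * q * z⁻¹ * ((w a)⁻¹ * w a) := by
          rw [ENNReal.inv_mul_cancel (hw₀ a) (hw a)]; ring
      _ = P a b * w b * (w a)⁻¹ * q * w a * z⁻¹ := by ring

lemma FirstHitPath.eq_cons {T : Set S} {s : S} {l : List S} (h : FirstHitPath T s l) :
    l = s :: l.tail := by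
  obtain ⟨hhead, -⟩ := h
  cases l <;> simp_all

lemma firstHitPath_singleton_iff {T : Set S} {s a : S} :
    FirstHitPath T s [a] ↔ a = s ∧ a ∈ T := by
  simp [FirstHitPath]

lemma firstHitPath_cons_cons_iff {T : Set S} {s a b : S} {t : List S} :
    FirstHitPath T s (a :: b :: t) ↔ a = s ∧ a ∉ T ∧ FirstHitPath T b (b :: t) := by
  simp only [FirstHitPath, List.head?_cons, Option.some.injEq, ne_eq, reduceCtorEq,
    not_false_eq_true, List.getLast_cons, List.length_cons, Order.lt_add_one_iff,
    add_le_add_iff_right, List.get_eq_getElem, Fin.forall_fin_succ, Fin.coe_ofNat_eq_mod,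
    Nat.zero_mod, zero_le, List.getElem_cons_zero, forall_const, Fin.val_succ,
    Order.add_one_le_iff, List.getElem_cons_succ, exists_const, exists_and_right,
    exists_true_left, true_and, and_congr_right_iff]
  tauto

lemma FirstHitPath.eq_singleton {T : Set S} {s : S} {l : List S} (h : FirstHitPath T s l)
    (hs : s ∈ T) : l = [s] := by
  obtain ⟨_ | ⟨b, t⟩, rfl⟩ : ∃ t, l = s :: t := ⟨_, h.eq_cons⟩
  · rfl
  · exact absurd hs (firstHitPath_cons_cons_iff.mp h).2.1

lemma FirstHitPath.exists_eq_cons_cons {T : Set S} {s : S} {l : List S}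
    (h : FirstHitPath T s l) (hs : s ∉ T) :
    ∃ b t, l = s :: b :: t ∧ FirstHitPath T b (b :: t) := by
  obtain ⟨_ | ⟨b, t⟩, rfl⟩ : ∃ t, l = s :: t := ⟨_, h.eq_cons⟩
  · exact absurd (firstHitPath_singleton_iff.mp h).2 hs
  · exact ⟨b, t, rfl, (firstHitPath_cons_cons_iff.mp h).2.2⟩

lemma sum_pathProb_le_one_of_firstHitPath {P : S → S → ℝ≥0∞} (hP : IsStochastic P)
    (T : Set S) (N : ℕ) :
    ∀ (s : S) (L : Finset (List S)), (∀ l ∈ L, FirstHitPath T s l ∧ l.length ≤ N) →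
      ∑ l ∈ L, pathProb P l ≤ 1 := by
  induction N with
  | zero =>
    intro s L hL
    have : L = ∅ := Finset.eq_empty_of_forall_notMem fun l hl => by
      obtain ⟨⟨-, hne, -⟩, hlen⟩ := hL l hl
      exact hne (List.eq_nil_of_length_eq_zero (Nat.le_zero.mp hlen))
    simp [this]
  | succ N ih =>
    intro s L hL
    by_cases hs : s ∈ T
    · calc ∑ l ∈ L, pathProb P l ≤ ∑ l ∈ {[s]}, pathProb P l :=
            Finset.sum_le_sum_of_subset fun l hl => by
              simp [(hL l hl).1.eq_singleton hs]
        _ = 1 := by simp [pathProb]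
    · set next : List S → S := fun l => l.tail.headD s
      have hsplit : ∀ l ∈ L, ∃ b t, l = s :: b :: t ∧ FirstHitPath T b (b :: t) ∧
          (b :: t).length ≤ N := fun l hl => by
        obtain ⟨b, t, rfl, hbt⟩ := (hL l hl).1.exists_eq_cons_cons hs
        exact ⟨b, t, rfl, hbt, by simpa using (hL _ hl).2⟩
      have htail : Set.InjOn List.tail (L : Set (List S)) := by
        intro l hl l' hl' h
        obtain ⟨b, t, rfl, -⟩ := hsplit l hl
        obtain ⟨b', t', rfl, -⟩ := hsplit l' hl'
        simp_all
      have hfiber : ∀ b ∈ L.image next,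
          ∑ l ∈ L with next l = b, pathProb P l ≤ P s b := fun b _ => by
        calc ∑ l ∈ L with next l = b, pathProb P l
            = P s b * ∑ l ∈ (L.filter (next · = b)).image List.tail, pathProb P l := by
              rw [Finset.sum_image fun l hl l' hl' => htail (Finset.mem_filter.mp hl).1
                (Finset.mem_filter.mp hl').1, Finset.mul_sum]
              refine Finset.sum_congr rfl fun l hl => ?_
              obtain ⟨hlL, rfl⟩ := Finset.mem_filter.mp hl
              obtain ⟨b, t, rfl, -⟩ := hsplit l hlL
              rfl
          _ ≤ P s b * 1 := by
              gcongr
              refine ih b _ fun l' hl' => ?_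
              obtain ⟨l, hl, rfl⟩ := Finset.mem_image.mp hl'
              obtain ⟨hlL, rfl⟩ := Finset.mem_filter.mp hl
              obtain ⟨b, t, rfl, hbt, hlen⟩ := hsplit l hlL
              exact ⟨hbt, hlen⟩
          _ = P s b := mul_one _
      calc ∑ l ∈ L, pathProb P l
          = ∑ b ∈ L.image next, ∑ l ∈ L with next l = b, pathProb P l :=
            (Finset.sum_fiberwise_of_maps_to (fun l hl => Finset.mem_image_of_mem next hl) _).symm
        _ ≤ ∑ b ∈ L.image next, P s b := Finset.sum_le_sum hfiber
        _ ≤ ∑' b, P s b := ENNReal.sum_le_tsum _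
        _ = 1 := hP s

lemma reachProb_le_one {P : S → S → ℝ≥0∞} (hP : IsStochastic P) (T : Set S) (s : S) :
    reachProb P T s ≤ 1 :=
  ENNReal.summable.tsum_le_of_sum_le fun L => by
    simpa [Finset.sum_map] using sum_pathProb_le_one_of_firstHitPath hP T
      (L.sup fun l => l.1.length) s (L.map (Function.Embedding.subtype _))
      (by simpa using fun l hl hmem => ⟨hl, Finset.le_sup (f := fun l => l.1.length) hmem⟩)

lemma pathProb_le_reachProb (P : S → S → ℝ≥0∞) {T : Set S} {s : S} {l : List S}
    (h : FirstHitPath T s l) : pathProb P l ≤ reachProb P T s :=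
  ENNReal.le_tsum (⟨l, h⟩ : {l : List S // FirstHitPath T s l})

lemma one_le_reachProb (P : S → S → ℝ≥0∞) {T : Set S} {s : S} (hs : s ∈ T) :
    1 ≤ reachProb P T s :=
  pathProb_le_reachProb P (firstHitPath_singleton_iff.mpr ⟨rfl, hs⟩)

section Abstraction

variable {P : S → S → ℝ≥0∞} {F : Set S} {S' : Type*} {P' : S' → S' → ℝ≥0∞} {F' : Set S'}
  {α : SA P F → S'}

lemma IsAbstraction.reachProb_ne_zero_of_firstHitPath (habs : IsAbstraction P F P' F' α)
    (l : List S) : ∀ u : SA P F, FirstHitPath F u.1 l → pathProb P l ≠ 0 →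
      reachProb P' F' (α u) ≠ 0 := by
  induction l with
  | nil => exact fun u h _ => absurd rfl h.2.1
  | cons a t ih =>
    intro u hl hpos
    by_cases hu : u.1 ∈ F
    · exact (zero_lt_one.trans_le (one_le_reachProb P' (habs.1 u hu))).ne'
    obtain ⟨b, t, heq, hbt⟩ := hl.exists_eq_cons_cons hu
    obtain ⟨rfl, rfl⟩ := List.cons_eq_cons.mp heq
    obtain ⟨hstep, htail⟩ := mul_ne_zero_iff.mp hpos
    have hb : b ∉ Av P F := fun hb => htail <|
      le_antisymm ((pathProb_le_reachProb P hbt).trans_eq hb) bot_le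
    refine fun hzero => mul_ne_zero hstep (ih ⟨b, hb⟩ hbt htail) (le_antisymm ?_ bot_le)
    calc P u.1 b * reachProb P' F' (α ⟨b, hb⟩)
        ≤ ∑' v : SA P F, P u.1 v.1 * reachProb P' F' (α v) :=
          ENNReal.le_tsum (f := fun v : SA P F => P u.1 v.1 * reachProb P' F' (α v)) ⟨b, hb⟩
      _ ≤ reachProb P' F' (α u) := habs.2 u hu
      _ = 0 := hzero

lemma IsAbstraction.reachProb_ne_zero (habs : IsAbstraction P F P' F' α) (u : SA P F) :
    reachProb P' F' (α u) ≠ 0 := by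
  obtain ⟨⟨l, hl⟩, hpos⟩ : ∃ l : {l : List S // FirstHitPath F u.1 l}, pathProb P l.1 ≠ 0 := by
    by_contra! h
    exact u.2 (ENNReal.tsum_eq_zero.mpr h)
  exact habs.reachProb_ne_zero_of_firstHitPath l u hl hpos

end Abstraction

theorem stmt9_general (P : S → S → ℝ≥0∞)
    (F : Set S) {S' : Type*}
    (P' : S' → S' → ℝ≥0∞) (hP' : IsStochastic P') (F' : Set S')
    (α : SA P F → S') (habs : IsAbstraction P F P' F' α)
    (s : SA P F) (l : List (SA P F)) (hne : l ≠ [])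
    (hhead : l.head? = some s) :
    pathProb P (l.map Subtype.val) =
      pathProb (biasedKernel P F P' F' α) (l.map some) *
        reachProb P' F' (α s) / reachProb P' F' (α (l.getLast hne)) := by
  obtain ⟨t, rfl⟩ : ∃ t, l = s :: t := ⟨l.tail, List.eq_cons_of_mem_head? hhead⟩
  rw [pathProb_map, pathProb_map]
  exact pathProb_reweight (fun a b => P a.1 b.1) (fun u => reachProb P' F' (α u))
    habs.reachProb_ne_zero (fun u => ne_top_of_le_ne_top ENNReal.one_ne_top
      (reachProb_le_one hP' F' (α u))) s t

theorem stmt9 [Countable S] (P : S → S → ℝ≥0∞) (hP : IsStochastic P)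
    (F : Set S) {S' : Type*} [Countable S']
    (P' : S' → S' → ℝ≥0∞) (hP' : IsStochastic P') (F' : Set S')
    (α : SA P F → S') (habs : IsAbstraction P F P' F' α)
    (s : SA P F) (l : List (SA P F)) (hne : l ≠ [])
    (hhead : l.head? = some s)
    (hpos : 0 < pathProb (biasedKernel P F P' F' α) (l.map some)) :
    pathProb P (l.map Subtype.val) =
      pathProb (biasedKernel P F P' F' α) (l.map some) *
        reachProb P' F' (α s) / reachProb P' F' (α (l.getLast hne)) :=
  stmt9_general P F P' hP' F' α habs s l hne hhead

end Thms
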